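/- Let G=(V,E) be a finite simple graph on n vertices with boundary set ∂V ⊆ V, let v_1,…,v_n be an enumeration of V, let f : V → ℝ be a nonnegative function with f(v_1)² ≤ f(v_2)² ≤ … ≤ f(v_n)², and set S_i = {v_1,…,v_i}. Then Σ_{u∼v} |f_u² − f_v²| − (1/2)·Σ_{u∼v, u,v∈∂V} |f_u² − f_v²| ≥ Σ_{i=1}^{n−1} |f(v_i)² − f(v_{i+1})²|·m(S_i, V∖S_i), where each sum over u ∼ v counts each edge exactly once. -/

import Mathlib

/-!
Since `f²` is nondecreasing along the enumeration, for every edge `uv` the difference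
`|f_u² − f_v²|` telescopes into the sum of the increments `f(v_{i+1})² − f(v_i)²` over exactly
those cuts `S_i` that the edge crosses. Summing over edges and exchanging the two sums (a discrete
coarea formula) turns both sums on the left into `Σ_i (f(v_{i+1})² − f(v_i)²)` times the number of
(boundary) edges crossing `S_i`, and these numbers are the two terms of `m(S_i, V ∖ S_i)`. So the
inequality in fact holds with equality.
-/

open Matrix Finset

namespace RN

variable {V : Type*}

/-- `|E(U,W)|`: the number of edges of `G` with one endpoint in `U` and one in `W`. -/
def ecount [Fintype V] [DecidableEq V] (G : SimpleGraph V) [DecidableRel G.Adj]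
    (U W : Finset V) : ℕ :=
  (G.edgeFinset.filter fun e => ∃ u ∈ U, ∃ w ∈ W, e = s(u, w)).card

/-- The measure `m(U,W) = |E(U,W)| - (1/2)|E(U ∩ ∂V, W ∩ ∂V)|`, where `B = ∂V`. -/
noncomputable def mMeas [Fintype V] [DecidableEq V] (G : SimpleGraph V) [DecidableRel G.Adj]
    (B : Finset V) (U W : Finset V) : ℝ :=
  (ecount G U W : ℝ) - (1/2) * (ecount G (U ∩ B) (W ∩ B) : ℝ)

end RN

open RN

namespace RN

theorem sub_eq_sum_range_ite {M : Type*} [AddCommGroup M] (x : ℕ → M) {a b m : ℕ}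
    (hab : a ≤ b) (hbm : b ≤ m) :
    x b - x a = ∑ i ∈ range m, if a ≤ i ∧ i < b then x (i + 1) - x i else 0 := by
  have hIco : {i ∈ range m | a ≤ i ∧ i < b} = Ico a b := by
    ext i
    simp only [mem_filter, mem_range, mem_Ico]
    omega
  rw [← sum_filter, hIco, sum_Ico_sub x hab]

variable {V : Type*} [Fintype V] [DecidableEq V]

/-- Written with `w ∈ Sᶜ` so that `ecount G S Sᶜ` is by definition the number of edges
crossing `S`. -/
def Crosses (S : Finset V) (e : Sym2 V) : Prop :=
  ∃ u ∈ S, ∃ w ∈ Sᶜ, e = s(u, w)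

instance (S : Finset V) : DecidablePred (Crosses S) := fun e =>
  inferInstanceAs (Decidable (∃ u ∈ S, ∃ w ∈ Sᶜ, e = s(u, w)))

theorem crosses_mk_iff {S : Finset V} {u v : V} :
    Crosses S s(u, v) ↔ u ∈ S ∧ v ∉ S ∨ v ∈ S ∧ u ∉ S := by
  simp only [Crosses, mem_compl, Sym2.eq_iff]
  constructor
  · rintro ⟨a, ha, b, hb, ⟨rfl, rfl⟩ | ⟨rfl, rfl⟩⟩
    exacts [.inl ⟨ha, hb⟩, .inr ⟨ha, hb⟩]
  · rintro (⟨hu, hv⟩ | ⟨hv, hu⟩)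
    exacts [⟨u, hu, v, hv, .inl ⟨rfl, rfl⟩⟩, ⟨v, hv, u, hu, .inr ⟨rfl, rfl⟩⟩]

theorem exists_mem_inter_mk_iff {S B : Finset V} {e : Sym2 V} :
    (∃ u ∈ S ∩ B, ∃ w ∈ Sᶜ ∩ B, e = s(u, w)) ↔ e ∈ B.sym2 ∧ Crosses S e := by
  induction e using Sym2.ind with
  | h a b =>
    simp only [mem_inter, mem_compl, Sym2.eq_iff, mk_mem_sym2_iff, crosses_mk_iff]
    constructor
    · rintro ⟨u, ⟨hu, huB⟩, w, ⟨hw, hwB⟩, ⟨rfl, rfl⟩ | ⟨rfl, rfl⟩⟩ <;> tauto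
    · rintro ⟨⟨haB, hbB⟩, ⟨ha, hb⟩ | ⟨hb, ha⟩⟩
      exacts [⟨a, ⟨ha, haB⟩, b, ⟨hb, hbB⟩, .inl ⟨rfl, rfl⟩⟩,
        ⟨b, ⟨hb, hbB⟩, a, ⟨ha, haB⟩, .inr ⟨rfl, rfl⟩⟩]

variable (G : SimpleGraph V) [DecidableRel G.Adj]

theorem mMeas_compl (B S : Finset V) :
    mMeas G B S Sᶜ = (#{e ∈ G.edgeFinset | Crosses S e} : ℝ)
      - 1 / 2 * #{e ∈ G.edgeFinset ∩ B.sym2 | Crosses S e} := by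
  have hB : ecount G (S ∩ B) (Sᶜ ∩ B) = #{e ∈ G.edgeFinset ∩ B.sym2 | Crosses S e} := by
    rw [ecount]
    congr 1
    ext e
    rw [mem_filter, mem_filter, exists_mem_inter_mk_iff, mem_inter, and_assoc]
  rw [mMeas, hB]
  rfl

section Coarea

variable {ℓ : V → ℕ} {x : ℕ → ℝ} {m : ℕ}

theorem crosses_sublevel_mk_iff {i : ℕ} {u v : V} :
    Crosses {w | ℓ w ≤ i} s(u, v) ↔ ℓ u ≤ i ∧ i < ℓ v ∨ ℓ v ≤ i ∧ i < ℓ u := by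
  simp only [crosses_mk_iff, mem_filter, mem_univ, true_and, not_le]

theorem abs_sub_eq_sum_crosses (hx : Monotone x) {u v : V} (hu : ℓ u ≤ m) (hv : ℓ v ≤ m) :
    |x (ℓ u) - x (ℓ v)| =
      ∑ i ∈ range m, if Crosses {w | ℓ w ≤ i} s(u, v) then x (i + 1) - x i else 0 := by
  wlog huv : ℓ u ≤ ℓ v generalizing u v
  · rw [abs_sub_comm, Sym2.eq_swap]
    exact this hv hu (le_of_not_ge huv)
  rw [abs_sub_comm, abs_of_nonneg (sub_nonneg.2 (hx huv)), sub_eq_sum_range_ite x huv hv]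
  refine sum_congr rfl fun i _ => ?_
  simp only [crosses_sublevel_mk_iff]
  congr 1
  apply propext
  omega

theorem sum_abs_sub_eq_sum_mul_card_crosses (F : Finset (Sym2 V)) (φ : V → ℝ)
    (hx : Monotone x) (hφ : ∀ v, φ v = x (ℓ v)) (hℓ : ∀ v, ℓ v ≤ m) :
    ∑ e ∈ F, Sym2.lift ⟨fun u v => |φ u - φ v|, fun _ _ => abs_sub_comm _ _⟩ e =
      ∑ i ∈ range m, (x (i + 1) - x i) * #{e ∈ F | Crosses {w | ℓ w ≤ i} e} := by
  have hedge : ∀ e : Sym2 V,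
      Sym2.lift ⟨fun u v => |φ u - φ v|, fun _ _ => abs_sub_comm _ _⟩ e =
        ∑ i ∈ range m, if Crosses {w | ℓ w ≤ i} e then x (i + 1) - x i else 0 := by
    refine Sym2.ind fun u v => ?_
    simp only [Sym2.lift_mk, hφ]
    exact abs_sub_eq_sum_crosses hx (hℓ u) (hℓ v)
  simp_rw [hedge]
  rw [sum_comm]
  refine sum_congr rfl fun i _ => ?_
  rw [← sum_filter, sum_const, nsmul_eq_mul, mul_comm]

theorem sum_abs_sub_sub_half_boundary_eq_sum_mMeas (B : Finset V) (φ : V → ℝ)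
    (hx : Monotone x) (hφ : ∀ v, φ v = x (ℓ v)) (hℓ : ∀ v, ℓ v ≤ m) :
    (∑ e ∈ G.edgeFinset, Sym2.lift ⟨fun u v => |φ u - φ v|, fun _ _ => abs_sub_comm _ _⟩ e)
      - 1 / 2 * ∑ e ∈ G.edgeFinset ∩ B.sym2,
          Sym2.lift ⟨fun u v => |φ u - φ v|, fun _ _ => abs_sub_comm _ _⟩ e =
      ∑ i ∈ range m, (x (i + 1) - x i) * mMeas G B {w | ℓ w ≤ i} ({w | ℓ w ≤ i} : Finset V)ᶜ := by
  simp only [sum_abs_sub_eq_sum_mul_card_crosses _ φ hx hφ hℓ, mMeas_compl, mul_sub, mul_sum,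
    ← sum_sub_distrib]
  refine sum_congr rfl fun i _ => ?_
  ring

end Coarea

end RN

/-- For a graph on `n` vertices `v_0, …, v_{n-1}` with boundary `B`, and a nonnegative
function `f` whose squares are nondecreasing along the enumeration, summing over each edge
exactly once (and with `S_i = {v_0, …, v_i}`):
`Σ_{u∼v} |f_u² − f_v²| − (1/2)·Σ_{u∼v, u,v∈∂V} |f_u² − f_v²|
  ≥ Σ_i |f(v_i)² − f(v_{i+1})²| · m(S_i, V∖S_i)`. -/
theorem sum_abs_sq_diff_ge_cut_sum {n : ℕ} (G : SimpleGraph (Fin n)) [DecidableRel G.Adj]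
    (B : Finset (Fin n)) (f : Fin n → ℝ)
    (hmono : ∀ i j : Fin n, i ≤ j → (f i) ^ 2 ≤ (f j) ^ 2) :
    (∑ e ∈ G.edgeFinset,
        Sym2.lift ⟨fun u v => |(f u) ^ 2 - (f v) ^ 2|, fun u v => abs_sub_comm _ _⟩ e)
      - (1/2) * (∑ e ∈ G.edgeFinset ∩ B.sym2,
          Sym2.lift ⟨fun u v => |(f u) ^ 2 - (f v) ^ 2|, fun u v => abs_sub_comm _ _⟩ e)
    ≥ ∑ i : Fin (n - 1),
        |(f ⟨i.1, by have := i.isLt; omega⟩) ^ 2 - (f ⟨i.1 + 1, by have := i.isLt; omega⟩) ^ 2|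
          * mMeas G B (Finset.univ.filter fun v => v.1 ≤ i.1)
              (Finset.univ.filter fun v => v.1 ≤ i.1)ᶜ := by
  rcases n with _ | m
  · simp [Finset.eq_empty_of_isEmpty G.edgeFinset]
  set x : ℕ → ℝ := fun k => f (Fin.clamp k m) ^ 2
  have hx : Monotone x := fun a b hab => hmono _ _ (Fin.clamp_monotone hab)
  have hfx : ∀ v : Fin (m + 1), f v ^ 2 = x v := fun v => by
    simp only [x, Fin.clamp, Nat.min_eq_left v.is_le]
  rw [sum_abs_sub_sub_half_boundary_eq_sum_mMeas G B (fun v => f v ^ 2) hx hfx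
    (fun v => v.is_le), ← Fin.sum_univ_eq_sum_range]
  refine ge_of_eq (sum_congr rfl fun i _ => ?_)
  rw [hfx, hfx, abs_sub_comm, abs_of_nonneg (sub_nonneg.2 (hx (Nat.le_succ _)))]
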